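/- arXiv:1906.04672 — 4 statements merged into one kernel-verified Lean document; each statement's English description precedes it below -/
import Mathlib

section
/- Let T be a tournament on 4 vertices and let S = A - Aᵀ be its Seidel adjacency matrix (A the 0-1 adjacency matrix). Then det(S) = 9 if T is a diamond, and det(S) = 1 otherwise. -/
open Finset Matrix

variable {V : Type*} [Fintype V] [DecidableEq V]

/-- A tournament given by a dominance function: `T i j = true` means `i` dominates `j`. -/
def IsTournament (T : V → V → Bool) : Prop :=
  (∀ i, T i i = false) ∧ ∀ i j, i ≠ j → T i j = !T j i

/-- The 0-1 adjacency matrix of a tournament. -/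
def adj (T : V → V → Bool) : Matrix V V ℤ :=
  Matrix.of fun i j => if T i j then 1 else 0

/-- The Seidel adjacency matrix `S = A - Aᵀ` of a tournament. -/
def seidel (T : V → V → Bool) : Matrix V V ℤ :=
  adj T - (adj T)ᵀ

/-- Number of 3-element subsets of `W` inducing a 3-cycle (each vertex dominates
exactly one other vertex of the triple). -/
def numC3On (T : V → V → Bool) (W : Finset V) : ℕ :=
  ((W.powersetCard 3).filter fun t => ∀ v ∈ t, (t.filter fun w => T v w).card = 1).card

/-- Number of 4-element subsets of `W` inducing a diamond, i.e. containing exactly one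
3-element subset that induces a 3-cycle. -/
def numDiamondsOn (T : V → V → Bool) (W : Finset V) : ℕ :=
  ((W.powersetCard 4).filter fun s =>
    ((s.powersetCard 3).filter fun t => ∀ v ∈ t, (t.filter fun w => T v w).card = 1).card
      = 1).card

/-- `δ_T`, the number of 4-element vertex subsets inducing a diamond. -/
def numDiamonds (T : V → V → Bool) : ℕ := numDiamondsOn T Finset.univ

/-- `c₃(T)`, the number of 3-element vertex subsets inducing a 3-cycle. -/
def numC3 (T : V → V → Bool) : ℕ := numC3On T Finset.univ

/-!
The Seidel matrix `S` of a 4-tournament is alternating, so `det S = Pf(S)²` with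
`Pf(S) = s₀₁s₂₃ - s₀₂s₁₃ + s₀₃s₁₂`, a sum of three signs. Hence `det S = 9` when the three
terms agree and `det S = 1` otherwise, and checking the 64 orientations of `K₄` shows that the
terms agree exactly when the tournament has a single 3-cycle.
-/

section Pfaffian

variable {R : Type*} [CommRing R]

def pfaffianFour (A : Matrix (Fin 4) (Fin 4) R) : R :=
  A 0 1 * A 2 3 - A 0 2 * A 1 3 + A 0 3 * A 1 2

theorem det_alternating_fin_four (a b c d e f : R) :
    !![0, a, b, c; -a, 0, d, e; -b, -d, 0, f; -c, -e, -f, 0].det =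
      (a * f - b * e + c * d) ^ 2 := by
  simp [det_succ_row_zero, Fin.sum_univ_succ, Fin.succAbove]
  ring

theorem det_eq_pfaffianFour_sq {A : Matrix (Fin 4) (Fin 4) R} (hA : Aᵀ = -A)
    (hdiag : ∀ i, A i i = 0) : A.det = pfaffianFour A ^ 2 := by
  have hskew : ∀ i j, A j i = -A i j := fun i j => by
    simpa using congr_fun (congr_fun hA i) j
  rw [pfaffianFour, ← det_alternating_fin_four]
  congr 1
  ext i j
  fin_cases i <;> fin_cases j <;> first | rfl | exact hdiag _ | exact hskew _ _

end Pfaffian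

theorem Int.sq_add_add_of_isUnit {x y z : ℤ} (hx : IsUnit x) (hy : IsUnit y) (hz : IsUnit z) :
    (x + y + z) ^ 2 = if x = y ∧ z = y then 9 else 1 := by
  rcases Int.isUnit_iff.1 hx with rfl | rfl <;> rcases Int.isUnit_iff.1 hy with rfl | rfl <;>
    rcases Int.isUnit_iff.1 hz with rfl | rfl <;> decide

omit [Fintype V] [DecidableEq V] in
theorem seidel_transpose (T : V → V → Bool) : (seidel T)ᵀ = -seidel T := by
  simp [seidel]

omit [Fintype V] [DecidableEq V] in
theorem seidel_apply_self (T : V → V → Bool) (i : V) : seidel T i i = 0 := by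
  simp [seidel]

omit [Fintype V] [DecidableEq V] in
theorem IsTournament.isUnit_seidel {T : V → V → Bool} (hT : IsTournament T) {i j : V}
    (hij : i ≠ j) : IsUnit (seidel T i j) := by
  rw [Int.isUnit_iff]
  simp only [seidel, adj, Matrix.sub_apply, transpose_apply, of_apply, hT.2 i j hij]
  cases T j i <;> simp

def tournamentFour (a b c d e f : Bool) : Fin 4 → Fin 4 → Bool :=
  fun i j => !![false, a, b, c; !a, false, d, e; !b, !d, false, f; !c, !e, !f, false] i j

theorem IsTournament.exists_eq_tournamentFour {T : Fin 4 → Fin 4 → Bool}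
    (hT : IsTournament T) : ∃ a b c d e f, T = tournamentFour a b c d e f := by
  refine ⟨T 0 1, T 0 2, T 0 3, T 1 2, T 1 3, T 2 3, funext fun i => funext fun j => ?_⟩
  fin_cases i <;> fin_cases j <;> first | exact hT.1 _ | exact hT.2 _ _ (by decide) | rfl

theorem IsTournament.numC3_eq_one_iff {T : Fin 4 → Fin 4 → Bool} (hT : IsTournament T) :
    numC3 T = 1 ↔
      seidel T 0 1 * seidel T 2 3 = -(seidel T 0 2 * seidel T 1 3) ∧
        seidel T 0 3 * seidel T 1 2 = -(seidel T 0 2 * seidel T 1 3) := by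
  obtain ⟨a, b, c, d, e, f, rfl⟩ := hT.exists_eq_tournamentFour
  clear hT
  revert a b c d e f
  decide

/-- The determinant of the Seidel adjacency matrix of a 4-tournament is
`9` if it is a diamond and `1` otherwise. -/
theorem stmt_0 (T : Fin 4 → Fin 4 → Bool) (hT : IsTournament T) :
    (seidel T).det =
      if (((Finset.univ : Finset (Fin 4)).powersetCard 3).filter
            fun t => ∀ v ∈ t, (t.filter fun w => T v w).card = 1).card = 1
      then 9 else 1 := by
  have hunit {i j : Fin 4} (hij : i ≠ j) := hT.isUnit_seidel hij
  rw [det_eq_pfaffianFour_sq (seidel_transpose T) (seidel_apply_self T), pfaffianFour,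
    sub_eq_add_neg, Int.sq_add_add_of_isUnit ((hunit (by decide)).mul (hunit (by decide)))
      ((hunit (by decide)).mul (hunit (by decide))).neg ((hunit (by decide)).mul (hunit (by decide)))]
  simp only [← hT.numC3_eq_one_iff]
  -- `numC3` and the statement elaborate the filter with different `Decidable` instances
  unfold numC3 numC3On
  congr
end

section
/- Let n be an odd positive integer and let S be an n×n skew-symmetric integer matrix all of whose off-diagonal entries lie in {−1, 1} and whose diagonal entries are 0. Then every (n−1)×(n−1) principal minor of S is nonzero; consequently S has rank n−1 (over the rationals), i.e. the eigenvalue 0 of S has multiplicity exactly 1. -/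
/-!
Modulo 2, a principal minor of order `m = n - 1` is `det (1 + J)` with `J` the all-ones matrix of
order `m`, which by the matrix determinant lemma is `1 + m ≡ 1` since `m` is even. So the minors are
odd, hence nonzero, and the rank of `S` is at least `m`; it is at most `m` because a skew-symmetric
matrix of odd order is singular.
-/

open Finset Matrix

variable {V : Type*} [Fintype V] [DecidableEq V]

namespace Matrix

variable {n : Type*} [Fintype n] [DecidableEq n]

theorem odd_det_of_even_diag_of_odd_offDiag (A : Matrix n n ℤ) (hcard : Even (Fintype.card n))
    (hdiag : ∀ i, Even (A i i)) (hoff : ∀ i j, i ≠ j → Odd (A i j)) : Odd A.det := by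
  have hmod : A.map (fun x ↦ (x : ZMod 2)) =
      1 + replicateCol Unit (fun _ ↦ (1 : ZMod 2)) * replicateRow Unit (fun _ ↦ (1 : ZMod 2)) := by
    ext i j
    by_cases hij : i = j
    · subst hij
      simp [mul_apply, (hdiag i).intCast_zmod_two]
      decide
    · simp [hij, mul_apply, (hoff i j hij).intCast_zmod_two]
  rw [← ZMod.intCast_eq_one_iff_odd, Int.cast_det, hmod, det_one_add_replicateCol_mul_replicateRow]
  simp [dotProduct, hcard.natCast_zmod_two]

theorem det_eq_zero_of_transpose_eq_neg {R : Type*} [CommRing R] [NoZeroDivisors R] [CharZero R]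
    {A : Matrix n n R} (hskew : Aᵀ = -A) (hcard : Odd (Fintype.card n)) : A.det = 0 := by
  rw [← CharZero.eq_neg_self_iff]
  calc A.det = Aᵀ.det := (det_transpose A).symm
    _ = -A.det := by rw [hskew, det_neg, hcard.neg_one_pow, neg_one_mul]

theorem rank_lt_card_of_det_eq_zero {K : Type*} [Field K] {A : Matrix n n K} (hdet : A.det = 0) :
    A.rank < Fintype.card n := by
  obtain ⟨v, hv, hAv⟩ := exists_mulVec_eq_zero_iff.mpr hdet
  have hker : 0 < Module.finrank K (LinearMap.ker A.mulVecLin) :=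
    Module.finrank_pos_iff_exists_ne_zero.mpr ⟨⟨v, hAv⟩, fun h ↦ hv (congrArg Subtype.val h)⟩
  have := LinearMap.finrank_range_add_finrank_ker A.mulVecLin
  rw [Module.finrank_fintype_fun_eq_card] at this
  rw [rank]
  omega

end Matrix

/-- For a skew-symmetric Seidel matrix of odd order `n = m+1`, every
`(n−1)×(n−1)` principal minor is nonzero, and the rank over `ℚ` is `n−1` (the eigenvalue `0`
has multiplicity exactly `1`). -/
theorem stmt_3 {m : ℕ} (hodd : Odd (m + 1)) (S : Matrix (Fin (m + 1)) (Fin (m + 1)) ℤ)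
    (hskew : Sᵀ = -S) (hdiag : ∀ i, S i i = 0)
    (hoff : ∀ i j, i ≠ j → S i j = 1 ∨ S i j = -1) :
    (∀ k : Fin (m + 1), (S.submatrix k.succAbove k.succAbove).det ≠ 0) ∧
      (S.map (fun x : ℤ => (x : ℚ))).rank = m := by
  have hm : Even m := Nat.not_odd_iff_even.mp (Nat.odd_add_one.mp hodd)
  have hminor (k : Fin (m + 1)) : (S.submatrix k.succAbove k.succAbove).det ≠ 0 := by
    have hoffDiag (i j : Fin m) (hij : i ≠ j) : Odd (S (k.succAbove i) (k.succAbove j)) := by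
      rcases hoff _ _ (Fin.succAbove_right_injective.ne hij) with h | h <;> rw [h]
      exacts [odd_one, odd_one.neg]
    have hdet := odd_det_of_even_diag_of_odd_offDiag (S.submatrix k.succAbove k.succAbove)
      (by simpa using hm) (fun i ↦ by simp [hdiag]) hoffDiag
    exact fun h ↦ by simp [h] at hdet
  set B := S.map (fun x : ℤ ↦ (x : ℚ))
  refine ⟨hminor, le_antisymm ?_ ?_⟩
  · have hB : B.det = 0 := by
      rw [← Int.cast_det, det_eq_zero_of_transpose_eq_neg hskew (by simpa using hodd), Int.cast_zero]
    simpa using rank_lt_card_of_det_eq_zero hB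
  · calc m = (B.submatrix (0 : Fin (m + 1)).succAbove (0 : Fin (m + 1)).succAbove).rank := by
          rw [rank_of_det_ne_zero, Fintype.card_fin]
          have h := hminor 0
          rwa [Ne, ← Int.cast_eq_zero (α := ℚ), Int.cast_det] at h
      _ ≤ B.rank := rank_submatrix_le _ _ _
end

section
/- Let T be an n-tournament with Seidel adjacency matrix S and let m_{ij} denote the (i,j) entry of S². Then the number of 3-cycles of T satisfies c₃(T) = n(n-1)(n-2)/24 + (1/4)·Σ_{i<j} m_{ij}. -/
open Finset Matrix

variable {V : Type*} [Fintype V] [DecidableEq V]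

/-! For distinct vertices `i, j, k` the Seidel entries `x = s_ij, y = s_jk, z = s_ki` are `±1`,
and `{i, j, k}` is a 3-cycle exactly when `x = y = z`; hence `xy + yz + zx` is `3` on a 3-cycle
and `-1` on a transitive triple. Summing over all ordered triples, with corrections for the
degenerate ones, gives `3 Σ_{i,j} m_ij = 8 C - n³ + n`, where `C = 3 c₃(T)` is the number of
cyclically ordered triples. As `S²` is symmetric with diagonal entries `1 - n`, the sum over
`i < j` follows. -/

section

variable {α : Type*} {T : α → α → Bool}

lemma IsTournament.ne_of_dominates (hT : IsTournament T) {i j : α} (h : T i j = true) :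
    i ≠ j := by
  rintro rfl; simp [hT.1 i] at h

lemma IsTournament.not_dominates (hT : IsTournament T) {i j : α} (h : T i j = true) :
    T j i = false := by
  simpa [h] using hT.2 j i (hT.ne_of_dominates h).symm

lemma seidel_apply (T : α → α → Bool) (i j : α) :
    seidel T i j = (if T i j then 1 else 0) - (if T j i then 1 else 0) := rfl

lemma seidel_apply_swap (T : α → α → Bool) (i j : α) : seidel T j i = -seidel T i j := by
  simp only [seidel_apply]; ring

lemma seidel_mul_add_mul_add_mul [DecidableEq α] (hT : IsTournament T) (i j k : α) :
    seidel T i j * seidel T j k + seidel T j k * seidel T k i + seidel T k i * seidel T i j =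
      4 * ((if T i j && T j k && T k i then 1 else 0) + (if T i k && T k j && T j i then 1 else 0))
        - 1 + (if i = j ∧ j = k then 1 else 0) := by
  have flip : ∀ a b : α, a ≠ b → T b a = !T a b := fun a b h => hT.2 b a h.symm
  simp only [seidel_apply]
  rcases eq_or_ne i j with rfl | hij
  · rcases eq_or_ne i k with rfl | hik
    · simp [hT.1]
    · rw [flip i k hik]; cases T i k <;> simp [hT.1, hik]
  rcases eq_or_ne j k with rfl | hjk
  · rw [flip i j hij]; cases T i j <;> simp [hT.1, hij]
  rcases eq_or_ne k i with rfl | hki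
  · rw [flip j k hjk]; cases T j k <;> simp [hT.1, hjk]
  rw [flip i j hij, flip j k hjk, flip k i hki]
  cases T i j <;> cases T j k <;> cases T k i <;> simp [hij]

lemma forall_card_filter_dominated_eq_one_iff [DecidableEq α] (hT : IsTournament T)
    {x y z : α} (hxy : x ≠ y) (hxz : x ≠ z) (hyz : y ≠ z) :
    (∀ v ∈ ({x, y, z} : Finset α), ({w ∈ ({x, y, z} : Finset α) | T v w}).card = 1) ↔
      (T x y && T y z && T z x) ∨ (T x z && T z y && T y x) := by
  have flip : ∀ a b : α, a ≠ b → T b a = !T a b := fun a b h => hT.2 b a h.symm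
  simp only [Finset.forall_mem_insert, Finset.mem_singleton, forall_eq, Finset.card_filter,
    Finset.sum_insert (show x ∉ ({y, z} : Finset α) by simp [hxy, hxz]),
    Finset.sum_insert (show y ∉ ({z} : Finset α) by simp [hyz]), Finset.sum_singleton,
    hT.1, flip x y hxy, flip x z hxz, flip y z hyz]
  cases T x y <;> cases T x z <;> cases T y z <;> simp

lemma card_rotations [DecidableEq α] {x y z : α} (hxy : x ≠ y) (hxz : x ≠ z) (hyz : y ≠ z) :
    #({(x, y, z), (y, z, x), (z, x, y)} : Finset (α × α × α)) = 3 :=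
  Finset.card_eq_three.mpr ⟨_, _, _, by simp [hxy], by simp [hxz], by simp [hyz], rfl⟩

variable [Fintype α]

lemma Finset.sum_rotate {M : Type*} [AddCommMonoid M] (f : α → α → α → M) :
    ∑ i, ∑ j, ∑ k, f j k i = ∑ i, ∑ j, ∑ k, f i j k := by
  rw [Finset.sum_comm]
  exact Finset.sum_congr rfl fun _ _ => Finset.sum_comm

lemma Finset.sum_sum_eq_two_nsmul_sum_lt_add_sum_diag {M : Type*} [AddCommMonoid M]
    [LinearOrder α] (f : α → α → M) (hf : ∀ i j, f i j = f j i) :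
    ∑ i, ∑ j, f i j =
      2 • ∑ p ∈ Finset.univ.filter (fun p : α × α => p.1 < p.2), f p.1 p.2 +
        ∑ i, f i i := by
  have hsplit : ∀ i j, f i j = ((if i < j then f i j else 0) + if j < i then f j i else 0) +
      if i = j then f i j else 0 := by
    intro i j
    rcases lt_trichotomy i j with h | rfl | h
    · simp [h, h.not_gt, h.ne]
    · simp
    · simp [h, h.not_gt, h.ne', hf i j]
  simp only [Finset.sum_filter, Fintype.sum_prod_type, two_nsmul]
  rw [Finset.sum_congr rfl fun i _ => Finset.sum_congr rfl fun j _ => hsplit i j]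
  simp only [Finset.sum_add_distrib, Finset.sum_ite_eq]
  rw [Finset.sum_comm (f := fun i j => if j < i then f j i else 0)]
  simp

def cyclicTriples (T : α → α → Bool) : Finset (α × α × α) :=
  {p | T p.1 p.2.1 && T p.2.1 p.2.2 && T p.2.2 p.1}

lemma mem_cyclicTriples {a b c : α} :
    (a, b, c) ∈ cyclicTriples T ↔ T a b ∧ T b c ∧ T c a := by
  simp [cyclicTriples, and_assoc]

lemma card_cyclicTriples_eq_sum (T : α → α → Bool) :
    (#(cyclicTriples T) : ℤ) = ∑ i, ∑ j, ∑ k, if T i j && T j k && T k i then 1 else 0 := by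
  simp only [cyclicTriples, Finset.card_filter, Fintype.sum_prod_type]
  push_cast; rfl

variable [DecidableEq α]

lemma filter_cyclicTriples_eq_rotations (hT : IsTournament T) {x y z : α}
    (hxy : T x y) (hyz : T y z) (hzx : T z x) :
    {p ∈ cyclicTriples T | {p.1, p.2.1, p.2.2} = ({x, y, z} : Finset α)} =
      {(x, y, z), (y, z, x), (z, x, y)} := by
  have := hT.not_dominates hxy
  have := hT.not_dominates hyz
  have := hT.not_dominates hzx
  have := hT.1 x
  have := hT.1 y
  have := hT.1 z
  ext ⟨a, b, c⟩
  simp only [Finset.mem_filter, mem_cyclicTriples, Finset.mem_insert, Finset.mem_singleton,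
    Prod.mk.injEq]
  constructor
  · rintro ⟨⟨hab, hbc, hca⟩, hset⟩
    have mem : ∀ v ∈ ({a, b, c} : Finset α), v = x ∨ v = y ∨ v = z := by
      simp [hset]
    obtain rfl | rfl | rfl := mem a (by simp) <;> obtain rfl | rfl | rfl := mem b (by simp) <;>
      obtain rfl | rfl | rfl := mem c (by simp) <;> simp_all
  · rintro (⟨rfl, rfl, rfl⟩ | ⟨rfl, rfl, rfl⟩ | ⟨rfl, rfl, rfl⟩) <;>
      refine ⟨by simp [*], ?_⟩ <;> ext <;> simp <;> tauto

lemma card_cyclicTriples (hT : IsTournament T) : #(cyclicTriples T) = 3 * numC3 T := by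
  set C := {t ∈ (univ : Finset α).powersetCard 3 | ∀ v ∈ t, #{w ∈ t | T v w} = 1} with hC
  have maps : ∀ p ∈ cyclicTriples T, ({p.1, p.2.1, p.2.2} : Finset α) ∈ C := by
    rintro ⟨a, b, c⟩ hp
    obtain ⟨hab, hbc, hca⟩ := mem_cyclicTriples.mp hp
    have hac := (hT.ne_of_dominates hca).symm
    rw [hC, Finset.mem_filter, Finset.mem_powersetCard_univ,
      forall_card_filter_dominated_eq_one_iff hT (hT.ne_of_dominates hab) hac
        (hT.ne_of_dominates hbc)]
    exact ⟨Finset.card_eq_three.mpr ⟨a, b, c, hT.ne_of_dominates hab, hac,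
      hT.ne_of_dominates hbc, rfl⟩, Or.inl (by simp [hab, hbc, hca])⟩
  have fiber : ∀ t ∈ C, #{p ∈ cyclicTriples T | {p.1, p.2.1, p.2.2} = t} = 3 := by
    intro t ht
    rw [hC, Finset.mem_filter, Finset.mem_powersetCard_univ] at ht
    obtain ⟨x, y, z, hxy, hxz, hyz, rfl⟩ := Finset.card_eq_three.mp ht.1
    rcases (forall_card_filter_dominated_eq_one_iff hT hxy hxz hyz).mp ht.2 with h | h <;>
      simp only [Bool.and_eq_true] at h
    · rw [filter_cyclicTriples_eq_rotations hT h.1.1 h.1.2 h.2, card_rotations hxy hxz hyz]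
    · rw [Finset.pair_comm y z, filter_cyclicTriples_eq_rotations hT h.1.1 h.1.2 h.2,
        card_rotations hxz hxy hyz.symm]
  rw [Finset.card_eq_sum_card_fiberwise maps, Finset.sum_const_nat fiber, mul_comm]
  rfl

lemma sum_seidel_sq (T : α → α → Bool) :
    ∑ i, ∑ j, (seidel T ^ 2) i j = ∑ i, ∑ j, ∑ k, seidel T i j * seidel T j k := by
  simp only [sq, Matrix.mul_apply]
  exact Finset.sum_congr rfl fun _ _ => Finset.sum_comm

lemma three_mul_sum_seidel_sq (hT : IsTournament T) :
    3 * ∑ i, ∑ j, (seidel T ^ 2) i j =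
      8 * #(cyclicTriples T) - Fintype.card α ^ 3 + Fintype.card α := by
  rw [sum_seidel_sq]
  set s := seidel T
  calc 3 * ∑ i, ∑ j, ∑ k, s i j * s j k
      = ∑ i, ∑ j, ∑ k, (s i j * s j k + s j k * s k i + s k i * s i j) := by
        have h2 := Finset.sum_rotate fun i j k => s i j * s j k
        have h3 := Finset.sum_rotate fun i j k => s k i * s i j
        simp only [Finset.sum_add_distrib] at h2 h3 ⊢
        rw [h2, ← h3]; ring
    _ = ∑ i, ∑ j, ∑ k, (4 * ((if T i j && T j k && T k i then 1 else 0) +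
          (if T i k && T k j && T j i then 1 else 0)) - 1 +
          (if i = j ∧ j = k then 1 else 0)) := by
        simp only [s, seidel_mul_add_mul_add_mul hT]
    _ = 8 * #(cyclicTriples T) - Fintype.card α ^ 3 + Fintype.card α := by
        have hswap : ∑ i : α, ∑ j, ∑ k, (if T i k && T k j && T j i then (1 : ℤ) else 0) =
            ∑ i, ∑ j, ∑ k, (if T i j && T j k && T k i then 1 else 0) :=
          Finset.sum_congr rfl fun _ _ => Finset.sum_comm
        have hdiag : ∑ i : α, ∑ j, ∑ k, (if i = j ∧ j = k then (1 : ℤ) else 0) =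
            Fintype.card α := by
          simp [ite_and]
        simp only [Finset.sum_add_distrib, Finset.sum_sub_distrib, ← Finset.mul_sum, hswap,
          hdiag, ← card_cyclicTriples_eq_sum, Finset.sum_const, Finset.card_univ,
          nsmul_eq_mul, mul_one]
        ring

lemma seidel_sq_apply_comm (T : α → α → Bool) (i j : α) :
    (seidel T ^ 2) i j = (seidel T ^ 2) j i := by
  simp only [sq, Matrix.mul_apply]
  refine Finset.sum_congr rfl fun k _ => ?_
  rw [seidel_apply_swap T k j, seidel_apply_swap T i k]; ring

lemma seidel_sq_apply_self (hT : IsTournament T) (i : α) :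
    (seidel T ^ 2) i i = 1 - Fintype.card α := by
  have h : ∀ k, seidel T i k * seidel T k i = (if i = k then 1 else 0) - 1 := by
    intro k
    rcases eq_or_ne i k with rfl | hik
    · simp [seidel_apply]
    · simp only [seidel_apply, hT.2 k i hik.symm, if_neg hik]
      cases T i k <;> simp
  simp [sq, Matrix.mul_apply, h]

lemma twentyfour_mul_numC3 [LinearOrder α] (hT : IsTournament T) :
    24 * (numC3 T : ℤ) = Fintype.card α * (Fintype.card α - 1) * (Fintype.card α - 2) +
      6 * ∑ p ∈ Finset.univ.filter (fun p : α × α => p.1 < p.2), (seidel T ^ 2) p.1 p.2 := by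
  have hsum := Finset.sum_sum_eq_two_nsmul_sum_lt_add_sum_diag _ (seidel_sq_apply_comm T)
  simp only [seidel_sq_apply_self hT, Finset.sum_const, Finset.card_univ, nsmul_eq_mul]
    at hsum
  have hcyc : (#(cyclicTriples T) : ℤ) = 3 * numC3 T := mod_cast card_cyclicTriples hT
  linear_combination 3 * hsum - three_mul_sum_seidel_sq hT - 8 * hcyc

end

/-- `c₃(T) = n(n-1)(n-2)/24 + (1/4)·Σ_{i<j} m_{ij}`, where `m_{ij}` are the
entries of `S²`. -/
theorem stmt_5 {n : ℕ} (T : Fin n → Fin n → Bool) (hT : IsTournament T) :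
    (numC3 T : ℚ) =
      (n : ℚ) * ((n : ℚ) - 1) * ((n : ℚ) - 2) / 24 +
        (1/4) * ∑ p ∈ Finset.univ.filter (fun p : Fin n × Fin n => p.1 < p.2),
          ((seidel T ^ 2) p.1 p.2 : ℚ) := by
  have h := congrArg (Int.cast : ℤ → ℚ) (twentyfour_mul_numC3 hT)
  push_cast [Fintype.card_fin] at h
  linear_combination h / 24
end

section
/- Let T and T′ be n-tournaments with Seidel adjacency matrices S and S′ such that S′ = D S D for some diagonal matrix D with diagonal entries in {−1, 1}. Then δ_T = δ_{T′}, i.e. T and T′ have the same number of 4-element vertex subsets inducing a diamond. -/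
open Finset Matrix

variable {V : Type*} [Fintype V] [DecidableEq V]

/-!
Put `f i := (d i = -1)`. Off the diagonal the Seidel matrix of a tournament is `±1`, so
`S' = D S D` says exactly that `T'` is `T` with every arc between `{f}` and `{¬f}` reversed.
A 4-set is a diamond when exactly one of its four triples is cyclic, a condition on the six
arcs inside it; checking all `2¹⁰` choices of these arcs and of `f` on the four vertices shows
that reversing the arcs across a cut never changes it.
-/

namespace Finset

variable {α : Type*} [DecidableEq α]

theorem powersetCard_eq_image_erase {s : Finset α} {k : ℕ} (hs : #s = k + 1) :
    s.powersetCard k = s.image s.erase := by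
  ext t
  simp only [mem_powersetCard, mem_image]
  constructor
  · rintro ⟨hts, htk⟩
    obtain ⟨a, hat, rfl⟩ := exists_eq_insert_iff.mpr ⟨hts, by omega⟩
    exact ⟨a, mem_insert_self a t, erase_insert hat⟩
  · rintro ⟨a, ha, rfl⟩
    exact ⟨erase_subset a s, by rw [card_erase_of_mem ha, hs, Nat.add_sub_cancel]⟩

theorem card_filter_powersetCard_of_card_eq_succ {s : Finset α} {k : ℕ} (hs : #s = k + 1)
    (p : Finset α → Prop) [DecidablePred p] :
    #((s.powersetCard k).filter p) = #(s.filter fun a => p (s.erase a)) := by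
  rw [powersetCard_eq_image_erase hs, filter_image,
    card_image_of_injOn ((erase_injOn s).mono (filter_subset _ s))]

end Finset

section Seidel

variable {α : Type*}

theorem seidel_apply_of_ne {T : α → α → Bool} (hT : IsTournament T) {i j : α} (hij : i ≠ j) :
    seidel T i j = if T i j then 1 else -1 := by
  rw [seidel, adj, Matrix.sub_apply, transpose_apply, of_apply, of_apply, hT.2 j i hij.symm]
  cases T i j <;> rfl

theorem eq_xor_of_seidel_eq_diagonal_mul [Fintype α] [DecidableEq α] {T T' : α → α → Bool}
    (hT : IsTournament T) (hT' : IsTournament T') {d : α → ℤ} (hd : ∀ i, d i = 1 ∨ d i = -1)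
    (h : seidel T' = diagonal d * seidel T * diagonal d) {i j : α} (hij : i ≠ j) :
    T' i j = (T i j ^^ (decide (d i = -1) ^^ decide (d j = -1))) := by
  have hS : seidel T' i j = d i * seidel T i j * d j := by
    rw [h, mul_diagonal, diagonal_mul]
  rw [seidel_apply_of_ne hT hij, seidel_apply_of_ne hT' hij] at hS
  generalize T i j = x at hS ⊢
  generalize T' i j = y at hS ⊢
  rcases hd i with hi | hi <;> rcases hd j with hj | hj <;>
    cases x <;> cases y <;> simp [hi, hj] at hS ⊢

end Seidel

section Diamonds

variable {α : Type*} [DecidableEq α]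

abbrev IsCyclicTriple (T : α → α → Bool) (t : Finset α) : Prop :=
  ∀ v ∈ t, #(t.filter fun w => T v w) = 1

theorem isCyclicTriple_iff {T : α → α → Bool} (hT : IsTournament T) {i j k : α}
    (hij : i ≠ j) (hik : i ≠ k) (hjk : j ≠ k) :
    IsCyclicTriple T {i, j, k} ↔ T i j = T j k ∧ T j k ≠ T i k := by
  have hji := hT.2 j i hij.symm
  have hki := hT.2 k i hik.symm
  have hkj := hT.2 k j hjk.symm
  simp only [IsCyclicTriple, mem_insert, mem_singleton, forall_eq_or_imp, forall_eq,
    card_filter, sum_insert, hij, hik, hjk, not_false_eq_true, or_self, sum_singleton,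
    hT.1 i, hT.1 j, hT.1 k, hji, hki, hkj]
  cases T i j <;> cases T j k <;> cases T i k <;> decide

/-- The number of cyclic triples on four vertices `a, b, c, d`, where the argument `xy` is
`T x y`; by `isCyclicTriple_iff`, the triple `x, y, z` is cyclic iff `xy = yz ≠ xz`. -/
def cyclicTripleCount (ab ac ad bc bd cd : Bool) : ℕ :=
  (if bc = cd ∧ cd ≠ bd then 1 else 0) + (if ac = cd ∧ cd ≠ ad then 1 else 0) +
    (if ab = bd ∧ bd ≠ ad then 1 else 0) + (if ab = bc ∧ bc ≠ ac then 1 else 0)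

theorem card_cyclicTriples_of_card_eq_four {T : α → α → Bool} [DecidablePred (IsCyclicTriple T)]
    (hT : IsTournament T) {a b c d : α}
    (hab : a ≠ b) (hac : a ≠ c) (had : a ≠ d) (hbc : b ≠ c) (hbd : b ≠ d) (hcd : c ≠ d) :
    #((({a, b, c, d} : Finset α).powersetCard 3).filter (IsCyclicTriple T)) =
      cyclicTripleCount (T a b) (T a c) (T a d) (T b c) (T b d) (T c d) := by
  rw [card_filter_powersetCard_of_card_eq_succ
    (card_eq_four.mpr ⟨a, b, c, d, hab, hac, had, hbc, hbd, hcd, rfl⟩), card_filter,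
    sum_insert (by simp [hab, hac, had]), sum_insert (by simp [hbc, hbd]), sum_pair hcd]
  simp only [erase_insert_of_ne, erase_insert, erase_singleton, insert_empty, mem_insert,
    mem_singleton, hab, hac, had, hbc, hbd, hcd, not_false_eq_true, or_self, ne_eq]
  simp only [isCyclicTriple_iff hT hbc hbd hcd, isCyclicTriple_iff hT hac had hcd,
    isCyclicTriple_iff hT hab had hbd, isCyclicTriple_iff hT hab hac hbc, cyclicTripleCount,
    add_assoc]

theorem cyclicTripleCount_xor_eq_one_iff (ab ac ad bc bd cd fa fb fc fd : Bool) :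
    cyclicTripleCount (ab ^^ (fa ^^ fb)) (ac ^^ (fa ^^ fc)) (ad ^^ (fa ^^ fd))
        (bc ^^ (fb ^^ fc)) (bd ^^ (fb ^^ fd)) (cd ^^ (fc ^^ fd)) = 1 ↔
      cyclicTripleCount ab ac ad bc bd cd = 1 := by
  revert ab ac ad bc bd cd fa fb fc fd
  decide

theorem numDiamondsOn_eq_of_eq_xor [Fintype α] {T T' : α → α → Bool} (hT : IsTournament T)
    (hT' : IsTournament T') (f : α → Bool) (hf : ∀ i j, i ≠ j → T' i j = (T i j ^^ (f i ^^ f j)))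
    (W : Finset α) : numDiamondsOn T W = numDiamondsOn T' W := by
  refine congrArg card (filter_congr fun s hs => ?_)
  obtain ⟨a, b, c, d, hab, hac, had, hbc, hbd, hcd, rfl⟩ :=
    card_eq_four.mp (mem_powersetCard.mp hs).2
  change #(filter (IsCyclicTriple T) _) = 1 ↔ #(filter (IsCyclicTriple T') _) = 1
  rw [card_cyclicTriples_of_card_eq_four hT hab hac had hbc hbd hcd,
    card_cyclicTriples_of_card_eq_four hT' hab hac had hbc hbd hcd,
    hf a b hab, hf a c hac, hf a d had, hf b c hbc, hf b d hbd, hf c d hcd,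
    cyclicTripleCount_xor_eq_one_iff]

end Diamonds

/-- Tournaments whose Seidel adjacency matrices are `{±1}`-diagonally similar
have the same number of diamonds. -/
theorem stmt_8 {n : ℕ} (T T' : Fin n → Fin n → Bool)
    (hT : IsTournament T) (hT' : IsTournament T')
    (d : Fin n → ℤ) (hd : ∀ i, d i = 1 ∨ d i = -1)
    (h : seidel T' = Matrix.diagonal d * seidel T * Matrix.diagonal d) :
    numDiamonds T = numDiamonds T' :=
  numDiamondsOn_eq_of_eq_xor hT hT' (fun i => decide (d i = -1))
    (fun _ _ hij => eq_xor_of_seidel_eq_diagonal_mul hT hT' hd h hij) univ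
end
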